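/- For real z with 0 < |z| ≤ 1, the spanning tree generating function of the square lattice satisfies T(z) = log(4/z) - (z²/8) · ₄F₃(1,1,3/2,3/2; 2,2,2; z²), where ₄F₃ is the generalized hypergeometric function. -/

import Mathlib

open Real

/-- Pochhammer symbol (rising factorial) for real `a`. -/
noncomputable def poch (a : ℝ) (n : ℕ) : ℝ := ∏ i ∈ Finset.range n, (a + i)

/-- The generalized hypergeometric function ₄F₃(1,1,3/2,3/2; 2,2,2; x). -/
noncomputable def F4321 (x : ℝ) : ℝ :=
  ∑' n : ℕ, (poch 1 n * poch 1 n * poch (3/2) n * poch (3/2) n /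
    (poch 2 n * poch 2 n * poch 2 n)) * x^n / (Nat.factorial n)

/-- Spanning tree generating function of the square lattice. -/
noncomputable def T (z : ℝ) : ℝ :=
  Real.log 4 + (1 / (4*π^2)) *
    (∫ k₁ in (-π)..π, ∫ k₂ in (-π)..π,
      Real.log (1/z - (1/2)*(Real.cos k₁ + Real.cos k₂)))

open Real MeasureTheory intervalIntegral Finset

/-- Wallis-type product: E t = C(2t,t)/4^t. -/
noncomputable def Ew (t : ℕ) : ℝ := ∏ i ∈ Finset.range t, (2*(i:ℝ)+1)/(2*i+2)

lemma Ew_succ (t : ℕ) : Ew (t+1) = Ew t * ((2*t+1)/(2*t+2)) := Finset.prod_range_succ _ t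

lemma Ew_zero : Ew 0 = 1 := Finset.prod_range_zero _

lemma Ew_pos (t : ℕ) : 0 < Ew t := by
  apply Finset.prod_pos; intro i _; positivity

lemma Ew_sq_le (t : ℕ) : Ew t ^ 2 * (2*t+1) ≤ 1 := by
  induction t with
  | zero => simp [Ew_zero]
  | succ t ih =>
    rw [Ew_succ]
    have h1 : (0:ℝ) < 2*t+2 := by positivity
    have key : (Ew t * ((2*t+1)/(2*t+2)))^2 * (2*(t+1)+1)
        ≤ Ew t ^2 * (2*t+1) * ((2*t+1)*(2*(t+1)+1)/(2*t+2)^2) := by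
      rw [mul_pow, div_pow]
      ring_nf
      apply le_of_eq; ring
    push_cast at key ⊢
    refine key.trans ?_
    have h2 : (2*(t:ℝ)+1)*(2*(t+1)+1)/(2*t+2)^2 ≤ 1 := by
      rw [div_le_one (by positivity)]; push_cast; nlinarith [sq_nonneg ((t:ℝ))]
    calc Ew t ^2 * (2*t+1) * ((2*t+1)*(2*(t+1)+1)/(2*t+2)^2)
        ≤ 1 * 1 := by
          apply mul_le_mul ih h2 (by positivity) zero_le_one
      _ = 1 := by ring

lemma Ew_eq_choose (t : ℕ) : Ew t = (Nat.choose (2*t) t : ℝ) / 4^t := by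
  induction t with
  | zero => simp [Ew_zero]
  | succ t ih =>
    rw [Ew_succ, ih]
    have hc : ((t:ℝ)+1) * (Nat.choose (2*(t+1)) (t+1) : ℝ)
        = 2 * (2*t+1) * (Nat.choose (2*t) t : ℝ) := by
      have := Nat.succ_mul_centralBinom_succ t
      have h2 : (((t+1) * (t+1).centralBinom : ℕ) : ℝ) = ((2 * (2*t+1) * t.centralBinom : ℕ) : ℝ) := by
        exact_mod_cast congrArg (Nat.cast (R := ℝ)) this
      push_cast at h2
      simpa [Nat.centralBinom] using h2
    have ht1 : ((t:ℝ)+1) ≠ 0 := by positivity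
    have h4 : (4:ℝ)^(t+1) ≠ 0 := by positivity
    have e : (Nat.choose (2*(t+1)) (t+1) : ℝ) * (2*(t:ℝ)+2) = 4*(2*t+1)*(Nat.choose (2*t) t : ℝ) := by
      nlinarith [hc]
    rw [div_mul_div_comm, div_eq_div_iff (by positivity) (by positivity), pow_succ]
    nlinarith [e, pow_pos (show (0:ℝ)<4 by norm_num) t]

/-- the integral of cos^m over [-π,π] -/
noncomputable def Ic (m : ℕ) : ℝ := ∫ x in (-π)..π, Real.cos x ^ m

lemma Ic_rec (n : ℕ) : Ic (n+2) = ((n:ℝ)+1)/((n:ℝ)+2) * Ic n := by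
  unfold Ic
  rw [integral_cos_pow n]
  simp [Real.sin_pi]

lemma Ic_even (t : ℕ) : Ic (2*t) = 2*π*Ew t := by
  induction t with
  | zero => simp [Ic, Ew_zero, two_mul]
  | succ t ih =>
    have : 2*(t+1) = 2*t+2 := by ring
    rw [this, Ic_rec, ih, Ew_succ]
    push_cast; ring

lemma Ic_odd (t : ℕ) : Ic (2*t+1) = 0 := by
  induction t with
  | zero => simp [Ic, integral_cos, Real.sin_pi]
  | succ t ih =>
    have : 2*(t+1)+1 = (2*t+1)+2 := by ring
    rw [this, Ic_rec, ih, mul_zero]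

lemma Ic_of_odd {m : ℕ} (h : ¬ Even m) : Ic m = 0 := by
  rcases Nat.even_or_odd m with he | ho
  · exact absurd he h
  · obtain ⟨t, rfl⟩ := ho
    exact Ic_odd t

/-- the integral of sin^(2t) over [-π,π] -/
lemma Is_even (t : ℕ) : (∫ x in (-π)..π, Real.sin x ^ (2*t)) = 2*π*Ew t := by
  induction t with
  | zero => simp [Ew_zero, two_mul]
  | succ t ih =>
    have h : 2*(t+1) = 2*t+2 := by ring
    rw [h, integral_sin_pow, Real.sin_pi]
    simp only [Real.sin_neg, Real.sin_pi]
    rw [ih, Ew_succ]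
    push_cast; ring

-- Vandermonde: sum of squares of binomial coefficients
lemma sum_choose_sq (m : ℕ) : ∑ t ∈ range (m+1), (m.choose t) * (m.choose t) = (2*m).choose m := by
  have h := Nat.add_choose_eq m m m
  rw [Finset.Nat.sum_antidiagonal_eq_sum_range_succ_mk] at h
  rw [two_mul, h]
  apply Finset.sum_congr rfl
  intro t ht
  simp only [Finset.mem_range] at ht
  rw [Nat.choose_symm (by omega)]

-- term identity
lemma term_choose (t s : ℕ) :
    ((2*(t+s)).choose (2*t)) * ((2*t).choose t) * ((2*s).choose s)
      = ((2*(t+s)).choose (t+s)) * ((t+s).choose t * (t+s).choose t) := by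
  have key : (((2*(t+s)).choose (2*t)) * ((2*t).choose t) * ((2*s).choose s) : ℝ)
      = (((2*(t+s)).choose (t+s)) * ((t+s).choose t * (t+s).choose t) : ℝ) := by
    rw [Nat.cast_choose ℝ (by omega : 2*t ≤ 2*(t+s)),
        Nat.cast_choose ℝ (by omega : t ≤ 2*t),
        Nat.cast_choose ℝ (by omega : s ≤ 2*s),
        Nat.cast_choose ℝ (by omega : t+s ≤ 2*(t+s)),
        Nat.cast_choose ℝ (by omega : t ≤ t+s)]
    have e1 : 2*(t+s) - 2*t = 2*s := by omega
    have e2 : 2*t - t = t := by omega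
    have e3 : 2*s - s = s := by omega
    have e4 : 2*(t+s) - (t+s) = t+s := by omega
    have e5 : t+s - t = s := by omega
    rw [e1, e2, e3, e4, e5]
    have f1 : ((2*t).factorial : ℝ) ≠ 0 := by positivity
    have f2 : ((2*s).factorial : ℝ) ≠ 0 := by positivity
    have f3 : ((t+s).factorial : ℝ) ≠ 0 := by positivity
    have f4 : ((t).factorial : ℝ) ≠ 0 := by positivity
    have f5 : ((s).factorial : ℝ) ≠ 0 := by positivity
    field_simp
  exact_mod_cast key

lemma sum_Ew (m : ℕ) :
    ∑ t ∈ range (m+1), ((2*m).choose (2*t) : ℝ) * Ew t * Ew (m-t)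
      = 4^m * Ew m^2 := by
  have hterm : ∀ t ∈ range (m+1), ((2*m).choose (2*t) : ℝ) * Ew t * Ew (m-t)
      = (((2*m).choose m : ℝ) * ((m.choose t : ℝ) * (m.choose t))) / 4^m := by
    intro t ht
    simp only [Finset.mem_range] at ht
    set s := m - t with hs
    have hm : m = t + s := by omega
    clear_value s
    have key := term_choose t s
    have keyR : (((2*(t+s)).choose (2*t)) * ((2*t).choose t) * ((2*s).choose s) : ℝ)
        = (((2*(t+s)).choose (t+s)) * ((t+s).choose t * (t+s).choose t) : ℝ) := by
      exact_mod_cast congrArg (Nat.cast (R := ℝ)) key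
    rw [Ew_eq_choose, Ew_eq_choose]
    rw [hm]
    have h4 : (4:ℝ)^(t+s) = 4^t * 4^s := by rw [pow_add]
    rw [h4]
    field_simp
    nlinarith [keyR]
  rw [Finset.sum_congr rfl hterm, ← Finset.sum_div, ← Finset.mul_sum]
  have hsum : ∑ t ∈ range (m+1), ((m.choose t : ℝ) * (m.choose t)) = ((2*m).choose m : ℝ) := by
    exact_mod_cast congrArg (Nat.cast (R := ℝ)) (sum_choose_sq m)
  rw [hsum, Ew_eq_choose]
  have h4 : (4:ℝ)^m ≠ 0 := by positivity
  field_simp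

lemma inner_pow (y : ℝ) (N : ℕ) :
    (∫ k in (-π)..π, (y + Real.cos k)^N)
      = ∑ j ∈ range (N+1), (N.choose j : ℝ) * y^j * Ic (N-j) := by
  have h1 : (∫ k in (-π)..π, (y + Real.cos k)^N)
      = ∫ k in (-π)..π, ∑ j ∈ range (N+1), ((N.choose j : ℝ) * y^j) * Real.cos k^(N-j) := by
    apply intervalIntegral.integral_congr
    intro k _
    dsimp only
    rw [add_pow]
    apply Finset.sum_congr rfl; intro j _; ring
  rw [h1, intervalIntegral.integral_finset_sum]
  · apply Finset.sum_congr rfl; intro j _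
    rw [intervalIntegral.integral_const_mul]
    simp only [Ic, mul_assoc]
  · intro j _
    apply Continuous.intervalIntegrable
    fun_prop

lemma Q_nonneg (T : ℕ) : 0 ≤ ∫ k in (-π)..π, ((1+|Real.cos k|)/2)^T := by
  apply intervalIntegral.integral_nonneg (by linarith [Real.pi_pos])
  intro k _; positivity

lemma Q_bound (T : ℕ) : (∫ k in (-π)..π, ((1+|Real.cos k|)/2)^T) ≤ 8*π*Ew T := by
  have pt : ∀ k : ℝ, ((1+|Real.cos k|)/2)^T
      ≤ Real.cos (k/2)^(2*T) + Real.sin (k/2)^(2*T) := by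
    intro k
    have hcos : Real.cos (k/2)^2 = (1 + Real.cos k)/2 := by
      rw [Real.cos_sq, show 2*(k/2) = k by ring]; ring
    have hsin : Real.sin (k/2)^2 = (1 - Real.cos k)/2 := by
      have h := Real.sin_sq_add_cos_sq (k/2); linarith
    rcases abs_cases (Real.cos k) with ⟨h1, _⟩ | ⟨h1, _⟩
    · rw [h1, ← hcos, ← pow_mul]
      exact le_add_of_nonneg_right ((even_two_mul T).pow_nonneg _)
    · rw [h1]
      have : (1 - Real.cos k)/2 = (1 + -Real.cos k)/2 := by ring
      rw [← this, ← hsin, ← pow_mul]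
      exact le_add_of_nonneg_left ((even_two_mul T).pow_nonneg _)
  have hmono : (∫ k in (-π)..π, ((1+|Real.cos k|)/2)^T)
      ≤ ∫ k in (-π)..π, (Real.cos (k/2)^(2*T) + Real.sin (k/2)^(2*T)) := by
    apply intervalIntegral.integral_mono_on (by linarith [Real.pi_pos])
    · apply Continuous.intervalIntegrable; fun_prop
    · apply Continuous.intervalIntegrable; fun_prop
    · intro k _; exact pt k
  refine hmono.trans ?_
  rw [intervalIntegral.integral_add (by apply Continuous.intervalIntegrable; fun_prop)
    (by apply Continuous.intervalIntegrable; fun_prop)]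
  have hc2 : (∫ k in (-π)..π, Real.cos (k/2)^(2*T)) = 2 * ∫ u in (-π/2)..(π/2), Real.cos u^(2*T) := by
    have := intervalIntegral.integral_comp_div (a := -π) (b := π) (c := 2)
      (fun u => Real.cos u ^ (2*T)) (by norm_num)
    rw [this]; simp [neg_div]
  have hs2 : (∫ k in (-π)..π, Real.sin (k/2)^(2*T)) = 2 * ∫ u in (-π/2)..(π/2), Real.sin u^(2*T) := by
    have := intervalIntegral.integral_comp_div (a := -π) (b := π) (c := 2)
      (fun u => Real.sin u ^ (2*T)) (by norm_num)
    rw [this]; simp [neg_div]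
  have hpi : -π ≤ -π/2 := by linarith [Real.pi_pos]
  have hpi2 : -π/2 ≤ π/2 := by linarith [Real.pi_pos]
  have hpi3 : π/2 ≤ π := by linarith [Real.pi_pos]
  have hcle : (∫ u in (-π/2)..(π/2), Real.cos u^(2*T)) ≤ Ic (2*T) := by
    apply intervalIntegral.integral_mono_interval hpi hpi2 hpi3
    · filter_upwards with x; exact (even_two_mul T).pow_nonneg _
    · apply Continuous.intervalIntegrable; fun_prop
  have hsle : (∫ u in (-π/2)..(π/2), Real.sin u^(2*T)) ≤ ∫ x in (-π)..π, Real.sin x^(2*T) := by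
    apply intervalIntegral.integral_mono_interval hpi hpi2 hpi3
    · filter_upwards with x; exact (even_two_mul T).pow_nonneg _
    · apply Continuous.intervalIntegrable; fun_prop
  rw [hc2, hs2]
  rw [Ic_even] at hcle
  rw [Is_even] at hsle
  nlinarith [Ew_pos T, Real.pi_pos]

lemma sum_even_select (m : ℕ) (f : ℕ → ℝ) (hf : ∀ j, ¬ Even j → f j = 0) :
    ∑ j ∈ range (2*m+1), f j = ∑ t ∈ range (m+1), f (2*t) := by
  have hinj : Set.InjOn (fun t => 2*t) (range (m+1)) := by
    intro a _ b _ h; simp only at h; omega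
  rw [show ∑ t ∈ range (m+1), f (2*t) = ∑ j ∈ (range (m+1)).image (fun t => 2*t), f j from
    (Finset.sum_image (fun a ha b hb h => hinj ha hb h)).symm]
  symm
  apply Finset.sum_subset
  · intro j hj
    simp only [Finset.mem_image, Finset.mem_range] at *
    obtain ⟨t, ht, rfl⟩ := hj; omega
  · intro j hj hnj
    apply hf
    intro hev
    apply hnj
    obtain ⟨t, rfl⟩ := hev
    simp only [Finset.mem_image, Finset.mem_range] at *
    exact ⟨t, by omega, by omega⟩

lemma flip_cos (G : ℝ → ℝ) :
    (∫ k in (-π)..π, G (Real.cos k)) = ∫ k in (-π)..π, G (-Real.cos k) := by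
  have hp : Function.Periodic (fun k => G (Real.cos k)) (2*π) := by
    intro x; simp [Real.cos_add_two_pi]
  have h1 : (∫ k in (-π)..π, G (-Real.cos k)) = ∫ k in (-π)..π, (fun x => G (Real.cos x)) (k + π) := by
    apply intervalIntegral.integral_congr; intro k _; simp [Real.cos_add_pi]
  have h2 := intervalIntegral.integral_comp_add_right (a := -π) (b := π) (fun x => G (Real.cos x)) π
  have h3 := hp.intervalIntegral_add_eq (-π + π) (-π)
  symm
  rw [h1, h2]
  have e1 : -π + π + 2*π = π + π := by ring
  have e2 : -π + 2*π = π := by ring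
  rw [e1, e2] at h3
  exact h3

lemma poch_succ (a : ℝ) (n : ℕ) : poch a (n+1) = poch a n * (a + n) :=
  Finset.prod_range_succ _ n

lemma poch_zero (a : ℝ) : poch a 0 = 1 := Finset.prod_range_zero _

lemma poch_one (n : ℕ) : poch 1 n = (n.factorial : ℝ) := by
  induction n with
  | zero => simp [poch_zero]
  | succ n ih => rw [poch_succ, ih, Nat.factorial_succ]; push_cast; ring

lemma poch_two (n : ℕ) : poch 2 n = ((n+1).factorial : ℝ) := by
  induction n with
  | zero => simp [poch_zero]
  | succ n ih =>
    rw [poch_succ, ih, Nat.factorial_succ (n+1)]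
    push_cast; ring

lemma poch_32 (n : ℕ) : poch (3/2) n = 2 * poch 2 n * Ew (n+1) := by
  induction n with
  | zero => simp [poch_zero, Ew_succ, Ew_zero]
  | succ n ih =>
    rw [poch_succ, ih, poch_succ 2 n, Ew_succ (n+1)]
    have h1 : (2*((n:ℝ)+1)+2) ≠ 0 := by positivity
    field_simp
    push_cast; ring

lemma coeff_eq (n : ℕ) (x : ℝ) :
    (poch 1 n * poch 1 n * poch (3/2) n * poch (3/2) n /
      (poch 2 n * poch 2 n * poch 2 n)) * x^n / (Nat.factorial n)
    = (4 * Ew (n+1)^2 / (n+1)) * x^n := by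
  have hp2 : poch 2 n = ((n+1).factorial : ℝ) := poch_two n
  have hp2pos : (0:ℝ) < poch 2 n := by rw [hp2]; positivity
  rw [poch_32, poch_one, hp2]
  have hfac : ((n+1).factorial : ℝ) = ((n:ℝ)+1) * (n.factorial : ℝ) := by
    rw [Nat.factorial_succ]; push_cast; ring
  have h1 : ((n.factorial : ℝ)) ≠ 0 := by positivity
  have h2 : ((n:ℝ)+1) ≠ 0 := by positivity
  rw [hfac]
  field_simp
  ring

noncomputable def gg (z : ℝ) (n : ℕ) (k1 : ℝ) : ℝ :=
  (-(z/2)^(n+1)/((n:ℝ)+1)) * ∑ j ∈ range (n+2), (((n+1).choose j : ℝ)) * Real.cos k1^j * Ic (n+1-j)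

lemma gg_eq (z : ℝ) (n : ℕ) (k1 : ℝ) :
    gg z n k1 = ∫ k2 in (-π)..π, -((z/2)*(Real.cos k1 + Real.cos k2))^(n+1) / ((n:ℝ)+1) := by
  have h1 : (∫ k2 in (-π)..π, -((z/2)*(Real.cos k1 + Real.cos k2))^(n+1) / ((n:ℝ)+1))
      = ∫ k2 in (-π)..π, (-(z/2)^(n+1)/((n:ℝ)+1)) * (Real.cos k1 + Real.cos k2)^(n+1) := by
    apply intervalIntegral.integral_congr
    intro k2 _
    dsimp only
    rw [mul_pow]
    ring
  rw [h1, intervalIntegral.integral_const_mul, inner_pow (Real.cos k1) (n+1)]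
  rfl

lemma gg_cont (z : ℝ) (n : ℕ) : Continuous (gg z n) := by
  unfold gg
  apply Continuous.mul continuous_const
  apply continuous_finset_sum
  intro j _
  fun_prop

lemma QQ_le (T : ℕ) : (∫ k in (-π)..π, ((1+|Real.cos k|)/2)^T) ^ 2 ≤ 64*π^2 / (2*(T:ℝ)+1) := by
  have h1 := Q_bound T
  have h0 := Q_nonneg T
  have hE := Ew_sq_le T
  have hEpos := Ew_pos T
  have hd : (0:ℝ) < 2*(T:ℝ)+1 := by positivity
  rw [le_div_iff₀ hd]
  calc (∫ k in (-π)..π, ((1+|Real.cos k|)/2)^T)^2 * (2*(T:ℝ)+1)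
      ≤ (8*π*Ew T)^2 * (2*(T:ℝ)+1) := by
        apply mul_le_mul_of_nonneg_right _ hd.le
        exact pow_le_pow_left₀ h0 h1 2
    _ = 64*π^2 * (Ew T^2 * (2*(T:ℝ)+1)) := by ring
    _ ≤ 64*π^2 * 1 := by
        apply mul_le_mul_of_nonneg_left _ (by positivity)
        exact_mod_cast hE
    _ = 64*π^2 := by ring

lemma gg_abs_le (z : ℝ) (hz0 : 0 ≤ z) (hz1 : z ≤ 1) (n : ℕ) (k1 : ℝ) :
    |gg z n k1| ≤ ((1+|Real.cos k1|)/2)^((n+1)/2)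
      * (∫ k in (-π)..π, ((1+|Real.cos k|)/2)^((n+1)/2)) / ((n:ℝ)+1) := by
  set T := (n+1)/2 with hT
  have h2T : 2*T ≤ n+1 := by omega
  have hpi : -π ≤ π := by linarith [Real.pi_pos]
  rw [gg_eq]
  have hb := intervalIntegral.norm_integral_le_integral_norm
    (f := fun k2 => -((z/2)*(Real.cos k1 + Real.cos k2))^(n+1) / ((n:ℝ)+1)) (μ := volume) hpi
  rw [Real.norm_eq_abs] at hb
  refine hb.trans ?_
  have hptw : ∀ k2 : ℝ, ‖-((z/2)*(Real.cos k1 + Real.cos k2))^(n+1) / ((n:ℝ)+1)‖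
      ≤ ((1+|Real.cos k1|)/2)^T * ((1+|Real.cos k2|)/2)^T / ((n:ℝ)+1) := by
    intro k2
    have hn1 : (0:ℝ) < (n:ℝ)+1 := by positivity
    rw [Real.norm_eq_abs, abs_div, abs_neg, abs_pow, abs_of_pos hn1]
    gcongr
    -- |(z/2)(c1+c2)|^(n+1) ≤ (D1 D2)^T
    have hc1 : |Real.cos k1| ≤ 1 := Real.abs_cos_le_one k1
    have hc2 : |Real.cos k2| ≤ 1 := Real.abs_cos_le_one k2
    have hx : |(z/2)*(Real.cos k1 + Real.cos k2)| ≤ (|Real.cos k1| + |Real.cos k2|)/2 := by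
      rw [abs_mul]
      have h1 : |z/2| ≤ 1/2 := by rw [abs_div]; simp [abs_of_nonneg hz0]; linarith
      have h2 : |Real.cos k1 + Real.cos k2| ≤ |Real.cos k1| + |Real.cos k2| := abs_add_le _ _
      calc |z/2| * |Real.cos k1 + Real.cos k2| ≤ (1/2) * (|Real.cos k1| + |Real.cos k2|) := by
            apply mul_le_mul h1 h2 (abs_nonneg _) (by norm_num)
        _ = (|Real.cos k1| + |Real.cos k2|)/2 := by ring
    have hs1 : (|Real.cos k1| + |Real.cos k2|)/2 ≤ 1 := by linarith
    have hs0 : 0 ≤ (|Real.cos k1| + |Real.cos k2|)/2 := by positivity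
    calc |(z/2)*(Real.cos k1 + Real.cos k2)|^(n+1)
        ≤ ((|Real.cos k1| + |Real.cos k2|)/2)^(n+1) := by
          apply pow_le_pow_left₀ (abs_nonneg _) hx
      _ ≤ ((|Real.cos k1| + |Real.cos k2|)/2)^(2*T) :=
          pow_le_pow_of_le_one hs0 hs1 h2T
      _ = (((|Real.cos k1| + |Real.cos k2|)/2)^2)^T := by rw [← pow_mul]
      _ ≤ (((1+|Real.cos k1|)/2) * ((1+|Real.cos k2|)/2))^T := by
          apply pow_le_pow_left₀ (by positivity)
          nlinarith [abs_nonneg (Real.cos k1), abs_nonneg (Real.cos k2)]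
      _ = ((1+|Real.cos k1|)/2)^T * ((1+|Real.cos k2|)/2)^T := mul_pow _ _ _
  have hmono : (∫ k2 in (-π)..π, ‖-((z/2)*(Real.cos k1 + Real.cos k2))^(n+1) / ((n:ℝ)+1)‖)
      ≤ ∫ k2 in (-π)..π, ((1+|Real.cos k1|)/2)^T * ((1+|Real.cos k2|)/2)^T / ((n:ℝ)+1) := by
    apply intervalIntegral.integral_mono_on hpi
    · apply Continuous.intervalIntegrable
      apply Continuous.norm; fun_prop
    · apply Continuous.intervalIntegrable; fun_prop
    · intro k2 _; exact hptw k2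
  refine hmono.trans ?_
  have : (∫ k2 in (-π)..π, ((1+|Real.cos k1|)/2)^T * ((1+|Real.cos k2|)/2)^T / ((n:ℝ)+1))
      = (((1+|Real.cos k1|)/2)^T / ((n:ℝ)+1)) * ∫ k2 in (-π)..π, ((1+|Real.cos k2|)/2)^T := by
    rw [← intervalIntegral.integral_const_mul]
    apply intervalIntegral.integral_congr
    intro k2 _; dsimp only; ring
  rw [this]
  apply le_of_eq
  ring

lemma gg_int_bound (z : ℝ) (hz0 : 0 ≤ z) (hz1 : z ≤ 1) (n : ℕ) :
    (∫ k1 in (-π)..π, |gg z n k1|) ≤ 64*π^2/((n:ℝ)+1)^2 := by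
  set T := (n+1)/2 with hT
  set Q : ℝ := ∫ k in (-π)..π, ((1+|Real.cos k|)/2)^T with hQ
  have hpi : -π ≤ π := by linarith [Real.pi_pos]
  have hQ0 : 0 ≤ Q := Q_nonneg T
  have hn1 : (0:ℝ) < (n:ℝ)+1 := by positivity
  have h1 : (∫ k1 in (-π)..π, |gg z n k1|)
      ≤ ∫ k1 in (-π)..π, ((1+|Real.cos k1|)/2)^T * Q / ((n:ℝ)+1) := by
    apply intervalIntegral.integral_mono_on hpi
    · apply Continuous.intervalIntegrable
      exact (gg_cont z n).abs
    · apply Continuous.intervalIntegrable; fun_prop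
    · intro k1 _; exact gg_abs_le z hz0 hz1 n k1
  have h2 : (∫ k1 in (-π)..π, ((1+|Real.cos k1|)/2)^T * Q / ((n:ℝ)+1))
      = Q^2 / ((n:ℝ)+1) := by
    have : (∫ k1 in (-π)..π, ((1+|Real.cos k1|)/2)^T * Q / ((n:ℝ)+1))
        = (Q / ((n:ℝ)+1)) * ∫ k1 in (-π)..π, ((1+|Real.cos k1|)/2)^T := by
      rw [← intervalIntegral.integral_const_mul]
      apply intervalIntegral.integral_congr
      intro k1 _; dsimp only; ring
    rw [this, ← hQ]; ring
  refine h1.trans (h2.le.trans ?_)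
  have h3 : Q^2 ≤ 64*π^2/(2*(T:ℝ)+1) := QQ_le T
  have h4 : ((n:ℝ)+1) ≤ 2*(T:ℝ)+1 := by
    have : n+1 ≤ 2*T+1 := by omega
    exact_mod_cast this
  have h5 : (0:ℝ) < 2*(T:ℝ)+1 := by positivity
  rw [div_le_div_iff₀ hn1 (by positivity)]
  calc Q^2 * (((n:ℝ)+1)^2)
      ≤ (64*π^2/(2*(T:ℝ)+1)) * ((2*(T:ℝ)+1)*((n:ℝ)+1)) := by
        apply mul_le_mul h3 (by nlinarith) (by positivity) (by positivity)
    _ = 64*π^2 * ((n:ℝ)+1) := by field_simp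
  
lemma gg_value_even (z : ℝ) (k : ℕ) : (∫ k1 in (-π)..π, gg z (2*k) k1) = 0 := by
  unfold gg
  rw [intervalIntegral.integral_const_mul]
  have h0 : (∫ k1 in (-π)..π, ∑ j ∈ range (2*k+2), ((2*k+1).choose j : ℝ) * Real.cos k1^j * Ic (2*k+1-j))
      = ∑ j ∈ range (2*k+2), ((2*k+1).choose j : ℝ) * Ic j * Ic (2*k+1-j) := by
    rw [intervalIntegral.integral_finset_sum (fun j _ => by
      apply Continuous.intervalIntegrable; fun_prop)]
    apply Finset.sum_congr rfl
    intro j _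
    have : (∫ k1 in (-π)..π, ((2*k+1).choose j : ℝ) * Real.cos k1^j * Ic (2*k+1-j))
        = (((2*k+1).choose j : ℝ) * Ic (2*k+1-j)) * ∫ k1 in (-π)..π, Real.cos k1^j := by
      rw [← intervalIntegral.integral_const_mul]
      apply intervalIntegral.integral_congr
      intro k1 _; dsimp only; ring
    rw [this]
    show _ * Ic j = _
    ring
  rw [h0]
  have hzero : ∀ j ∈ range (2*k+2), ((2*k+1).choose j : ℝ) * Ic j * Ic (2*k+1-j) = 0 := by
    intro j hj
    simp only [Finset.mem_range] at hj
    rcases Nat.even_or_odd j with he | ho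
    · have : ¬ Even (2*k+1-j) := by
        rcases he with ⟨t, rfl⟩
        rintro ⟨s, hs⟩; omega
      rw [Ic_of_odd this, mul_zero]
    · have : ¬ Even j := Nat.not_even_iff_odd.mpr ho
      rw [Ic_of_odd this, mul_zero, zero_mul]
  rw [Finset.sum_congr rfl hzero]
  simp

lemma gg_value_odd (z : ℝ) (k : ℕ) :
    (∫ k1 in (-π)..π, gg z (2*k+1) k1)
      = -(z^(2*(k+1)) * (4*π^2) * Ew (k+1)^2 / (2*((k:ℝ)+1))) := by
  unfold gg
  rw [intervalIntegral.integral_const_mul]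
  set m := k+1 with hm
  have hN : 2*k+1+1 = 2*m := by omega
  rw [hN, show 2*k+1+2 = 2*m+1 by omega]
  have h0 : (∫ k1 in (-π)..π, ∑ j ∈ range (2*m+1), ((2*m).choose j : ℝ) * Real.cos k1^j * Ic (2*m-j))
      = ∑ j ∈ range (2*m+1), ((2*m).choose j : ℝ) * Ic j * Ic (2*m-j) := by
    rw [intervalIntegral.integral_finset_sum (fun j _ => by
      apply Continuous.intervalIntegrable; fun_prop)]
    apply Finset.sum_congr rfl
    intro j _
    have : (∫ k1 in (-π)..π, ((2*m).choose j : ℝ) * Real.cos k1^j * Ic (2*m-j))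
        = (((2*m).choose j : ℝ) * Ic (2*m-j)) * ∫ k1 in (-π)..π, Real.cos k1^j := by
      rw [← intervalIntegral.integral_const_mul]
      apply intervalIntegral.integral_congr
      intro k1 _; dsimp only; ring
    rw [this]
    show _ * Ic j = _
    ring
  have hsel : ∑ j ∈ range (2*m+1), ((2*m).choose j : ℝ) * Ic j * Ic (2*m-j)
      = ∑ t ∈ range (m+1), ((2*m).choose (2*t) : ℝ) * Ic (2*t) * Ic (2*m-2*t) := by
    apply sum_even_select m (fun j => ((2*m).choose j : ℝ) * Ic j * Ic (2*m-j))
    intro j hj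
    rw [Ic_of_odd hj, mul_zero, zero_mul]
  have hval : ∑ t ∈ range (m+1), ((2*m).choose (2*t) : ℝ) * Ic (2*t) * Ic (2*m-2*t)
      = 4*π^2 * (4^m * Ew m^2) := by
    have : ∀ t ∈ range (m+1), ((2*m).choose (2*t) : ℝ) * Ic (2*t) * Ic (2*m-2*t)
        = 4*π^2 * (((2*m).choose (2*t) : ℝ) * Ew t * Ew (m-t)) := by
      intro t ht
      simp only [Finset.mem_range] at ht
      have h1 : 2*m - 2*t = 2*(m-t) := by omega
      rw [h1, Ic_even, Ic_even]
      ring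
    rw [Finset.sum_congr rfl this, ← Finset.mul_sum, sum_Ew]
  rw [h0, hsel, hval]
  have hc : (((2*k+1 : ℕ):ℝ)+1) = 2*((k:ℝ)+1) := by push_cast; ring
  rw [hc]
  have hz2 : (z/2)^(2*m) = z^(2*m)/4^m := by
    rw [div_pow]
    congr 1
    rw [pow_mul]
    norm_num
  rw [hz2]
  have h4 : (4:ℝ)^m ≠ 0 := by positivity
  have hk1 : 2*((k:ℝ)+1) ≠ 0 := by positivity
  field_simp

lemma xbound (z : ℝ) (hz0 : 0 ≤ z) (hz1 : z ≤ 1) (k1 k2 : ℝ) :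
    |(z/2)*(Real.cos k1 + Real.cos k2)| ≤ (1+|Real.cos k1|)/2 := by
  have hc2 : |Real.cos k2| ≤ 1 := Real.abs_cos_le_one k2
  rw [abs_mul]
  have h1 : |z/2| ≤ 1/2 := by rw [abs_div]; simp [abs_of_nonneg hz0]; linarith
  have h2 : |Real.cos k1 + Real.cos k2| ≤ |Real.cos k1| + 1 :=
    (abs_add_le _ _).trans (by linarith)
  calc |z/2| * |Real.cos k1 + Real.cos k2| ≤ (1/2) * (|Real.cos k1| + 1) := by
        apply mul_le_mul h1 h2 (abs_nonneg _) (by norm_num)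
    _ = (1+|Real.cos k1|)/2 := by ring

lemma inner_hasSum (z : ℝ) (hz : 0 < z) (hz1 : z ≤ 1) (k1 : ℝ) (hk : |Real.cos k1| < 1) :
    HasSum (fun n : ℕ => gg z n k1)
      (∫ k2 in (-π)..π, Real.log (1 - (z/2)*(Real.cos k1 + Real.cos k2))) := by
  set ρ : ℝ := (1+|Real.cos k1|)/2 with hρ
  have hρ0 : 0 ≤ ρ := by positivity
  have hρ1 : ρ < 1 := by rw [hρ]; linarith
  have hx : ∀ k2, |(z/2)*(Real.cos k1 + Real.cos k2)| ≤ ρ := fun k2 => xbound z hz.le hz1 k1 k2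
  have key := intervalIntegral.hasSum_integral_of_dominated_convergence
    (μ := volume) (a := -π) (b := π)
    (F := fun (n : ℕ) (k2 : ℝ) => -((z/2)*(Real.cos k1 + Real.cos k2))^(n+1) / ((n:ℝ)+1))
    (f := fun k2 => Real.log (1 - (z/2)*(Real.cos k1 + Real.cos k2)))
    (bound := fun n _ => ρ^(n+1))
    (fun n => Continuous.aestronglyMeasurable (by fun_prop))
    (fun n => by
      filter_upwards with t _
      have hn1 : (0:ℝ) < (n:ℝ)+1 := by positivity
      rw [Real.norm_eq_abs, abs_div, abs_neg, abs_pow, abs_of_pos hn1]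
      calc |(z/2)*(Real.cos k1 + Real.cos t)|^(n+1) / ((n:ℝ)+1)
          ≤ |(z/2)*(Real.cos k1 + Real.cos t)|^(n+1) :=
            div_le_self (by positivity) (by linarith)
        _ ≤ ρ^(n+1) := pow_le_pow_left₀ (abs_nonneg _) (hx t) _)
    (by
      filter_upwards with t _
      exact ((summable_geometric_of_lt_one hρ0 hρ1).mul_right ρ).congr
        (fun n => by rw [← pow_succ]))
    (by apply _root_.intervalIntegrable_const)
    (by
      filter_upwards with t _
      have habs : |(z/2)*(Real.cos k1 + Real.cos t)| < 1 := lt_of_le_of_lt (hx t) hρ1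
      have h := (Real.hasSum_pow_div_log_of_abs_lt_one habs).neg
      rw [neg_neg] at h
      refine h.congr_fun ?_
      intro n
      rw [neg_div])
  refine key.congr_fun ?_
  intro n
  exact gg_eq z n k1

lemma inner_value (z : ℝ) (hz : 0 < z) (hz1 : z ≤ 1) (k1 : ℝ) (hk : |Real.cos k1| < 1) :
    (∫ k2 in (-π)..π, Real.log (1/z - (1/2)*(Real.cos k1 + Real.cos k2)))
      = (∫ k2 in (-π)..π, Real.log (1 - (z/2)*(Real.cos k1 + Real.cos k2)))
        - 2*π*Real.log z := by
  set ρ : ℝ := (1+|Real.cos k1|)/2 with hρ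
  have hρ1 : ρ < 1 := by rw [hρ]; linarith
  have hpos : ∀ k2 : ℝ, 0 < 1 - (z/2)*(Real.cos k1 + Real.cos k2) := by
    intro k2
    have hx := xbound z hz.le hz1 k1 k2
    have := le_abs_self ((z/2)*(Real.cos k1 + Real.cos k2))
    have : (z/2)*(Real.cos k1 + Real.cos k2) < 1 := by
      calc (z/2)*(Real.cos k1 + Real.cos k2) ≤ |(z/2)*(Real.cos k1 + Real.cos k2)| := le_abs_self _
        _ ≤ ρ := hx
        _ < 1 := hρ1
    linarith
  have hpt : Set.EqOn (fun k2 => Real.log (1/z - (1/2)*(Real.cos k1 + Real.cos k2)))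
      (fun k2 => Real.log (1 - (z/2)*(Real.cos k1 + Real.cos k2)) - Real.log z)
      (Set.uIcc (-π) π) := by
    intro k2 _
    dsimp only
    have heq : 1/z - (1/2)*(Real.cos k1 + Real.cos k2)
        = (1 - (z/2)*(Real.cos k1 + Real.cos k2))/z := by
      rw [eq_div_iff hz.ne', sub_mul, one_div, inv_mul_cancel₀ hz.ne']; ring
    rw [heq, Real.log_div (hpos k2).ne' (ne_of_gt hz)]
  rw [intervalIntegral.integral_congr hpt]
  rw [intervalIntegral.integral_sub ?hint intervalIntegrable_const]
  · rw [intervalIntegral.integral_const, smul_eq_mul]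
    congr 1
    ring
  case hint =>
    apply Continuous.intervalIntegrable
    apply Continuous.log (by fun_prop)
    intro k2
    exact (hpos k2).ne'


lemma summable_inv_sq : Summable (fun n : ℕ => 1/((n:ℝ)+1)^2) := by
  have h := (summable_one_div_nat_pow (p := 2)).mpr one_lt_two
  have h2 := (summable_nat_add_iff (f := fun n : ℕ => 1/(n:ℝ)^2) 1).mpr h
  refine h2.congr ?_
  intro n
  push_cast
  ring_nf

lemma core (z : ℝ) (hz : 0 < z) (hz1 : z ≤ 1) :
    (∫ k₁ in (-π)..π, ∫ k₂ in (-π)..π,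
      Real.log (1/z - (1/2)*(Real.cos k₁ + Real.cos k₂)))
    = -(4*π^2) * Real.log z
      - 4*π^2 * ∑' k : ℕ, z^(2*(k+1)) * Ew (k+1)^2 / (2*((k:ℝ)+1)) := by
  have hpi : -π ≤ π := by linarith [Real.pi_pos]
  set μ : Measure ℝ := volume.restrict (Set.Ioc (-π) π) with hμ
  set F : ℕ → ℝ → ℝ :=
    fun n k1 => (if n = 0 then (-(2*π))*Real.log z else 0) + gg z n k1 with hF
  set v : ℕ → ℝ := fun n => ∫ k1 in (-π)..π, gg z n k1 with hv
  -- almost everywhere goodness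
  have hgood : ∀ᵐ k1 ∂μ, |Real.cos k1| < 1 := by
    apply ae_restrict_of_ae
    rw [MeasureTheory.ae_iff]
    refine measure_mono_null ?_
      (Set.Countable.measure_zero (Set.countable_range (fun n : ℤ => (n:ℝ)*π)) _)
    · intro x hx
      simp only [Set.mem_setOf_eq, not_lt] at hx
      have h1 : |Real.cos x| = 1 := le_antisymm (Real.abs_cos_le_one x) hx
      have h3 : Real.cos x^2 = 1 := by rw [← sq_abs, h1]; norm_num
      have h4 : Real.sin x^2 = 0 := by
        have := Real.sin_sq_add_cos_sq x; linarith
      have h2 : Real.sin x = 0 := by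
        exact pow_eq_zero_iff (n := 2) (by norm_num) |>.mp h4
      rw [Real.sin_eq_zero_iff] at h2
      obtain ⟨n, hn⟩ := h2
      exact ⟨n, hn⟩
  -- continuity of F n
  have hFcont : ∀ n, Continuous (F n) := by
    intro n
    exact continuous_const.add (gg_cont z n)
  have hFint : ∀ n, Integrable (F n) μ := fun n => (hFcont n).integrableOn_Ioc
  have hbase := summable_inv_sq
  have hsum2 : Summable (fun n : ℕ => 64*π^2/((n:ℝ)+1)^2) := by
    refine (hbase.mul_left (64*π^2)).congr ?_
    intro n; rw [mul_one_div]
  -- summability of norm integrals of F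
  have hnormle : ∀ n : ℕ, (∫ k1, ‖F n k1‖ ∂μ)
      ≤ (if n = 0 then 2*π*(2*π*|Real.log z|) else 0) + 64*π^2/((n:ℝ)+1)^2 := by
    intro n
    have he : (∫ k1, ‖F n k1‖ ∂μ) = ∫ k1 in (-π)..π, ‖F n k1‖ := by
      rw [intervalIntegral.integral_of_le hpi]
    rw [he]
    have hmono : (∫ k1 in (-π)..π, ‖F n k1‖)
        ≤ ∫ k1 in (-π)..π, ((if n = 0 then (2*π)*|Real.log z| else 0) + |gg z n k1|) := by
      apply intervalIntegral.integral_mono_on hpi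
      · exact ((hFcont n).norm).intervalIntegrable _ _
      · apply Continuous.intervalIntegrable
        exact continuous_const.add (gg_cont z n).abs
      · intro k1 _
        rw [hF]
        refine (norm_add_le _ _).trans ?_
        apply add_le_add_left
        by_cases h : n = 0 <;> simp [h, abs_mul, abs_of_nonneg Real.pi_pos.le]
    refine hmono.trans ?_
    rw [intervalIntegral.integral_add intervalIntegrable_const
      (((gg_cont z n).abs).intervalIntegrable _ _)]
    rw [intervalIntegral.integral_const, smul_eq_mul]
    apply add_le_add
    · by_cases h : n = 0 <;> simp [h] <;> nlinarith [Real.pi_pos, abs_nonneg (Real.log z)]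
    · exact gg_int_bound z hz.le hz1 n
  have hFnormsummable : Summable (fun n => ∫ k1, ‖F n k1‖ ∂μ) := by
    apply Summable.of_nonneg_of_le
      (fun n => integral_nonneg (fun k1 => norm_nonneg _)) hnormle
    apply Summable.add
    · exact (hasSum_ite_eq (0:ℕ) (2*π*(2*π*|Real.log z|))).summable
    · exact hsum2
  -- the exchange
  have hkey := MeasureTheory.integral_tsum_of_summable_integral_norm hFint hFnormsummable
  -- identify the integral of the tsum with the double integral
  have hcongr : (∫ k1, (∑' n, F n k1) ∂μ)
      = ∫ k₁ in (-π)..π, ∫ k₂ in (-π)..π,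
          Real.log (1/z - (1/2)*(Real.cos k₁ + Real.cos k₂)) := by
    rw [intervalIntegral.integral_of_le hpi]
    apply MeasureTheory.integral_congr_ae
    filter_upwards [hgood] with k1 hk1
    have hs := (hasSum_ite_eq (0:ℕ) ((-(2*π))*Real.log z)).add (inner_hasSum z hz hz1 k1 hk1)
    rw [hF]
    rw [hs.tsum_eq, inner_value z hz hz1 k1 hk1]
    ring
  -- value of each ∫ F n
  have hIv : ∀ n : ℕ, (∫ k1, F n k1 ∂μ)
      = 2*π*(if n = 0 then (-(2*π))*Real.log z else 0) + v n := by
    intro n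
    have he : (∫ k1, F n k1 ∂μ) = ∫ k1 in (-π)..π, F n k1 := by
      rw [intervalIntegral.integral_of_le hpi]
    rw [he, hF]
    rw [intervalIntegral.integral_add intervalIntegrable_const
      ((gg_cont z n).intervalIntegrable _ _)]
    rw [intervalIntegral.integral_const, smul_eq_mul, hv]
    congr 1
    ring
  -- summability of v
  have hsv : Summable v := by
    apply Summable.of_norm_bounded hsum2
    intro n
    rw [hv]
    refine (intervalIntegral.norm_integral_le_integral_norm hpi).trans ?_
    exact gg_int_bound z hz.le hz1 n
  have hIsum : Summable (fun n => 2*π*(if n = 0 then (-(2*π))*Real.log z else 0)) := by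
    apply Summable.mul_left
    exact (hasSum_ite_eq (0:ℕ) ((-(2*π))*Real.log z)).summable
  -- explicit odd values
  set w : ℕ → ℝ := fun k => -(z^(2*(k+1)) * (4*π^2) * Ew (k+1)^2 / (2*((k:ℝ)+1))) with hw
  have hvodd : ∀ k : ℕ, v (2*k+1) = w k := fun k => gg_value_odd z k
  have hveven : ∀ k : ℕ, v (2*k) = 0 := fun k => gg_value_even z k
  have hwsummable : Summable w := by
    apply Summable.of_norm_bounded (g := fun k : ℕ => 4*π^2 * (1/((k:ℝ)+1)^2))
      (hbase.mul_left _)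
    intro k
    rw [hw]
    have hEpos := Ew_pos (k+1)
    have hzp : z^(2*(k+1)) ≤ 1 := pow_le_one₀ hz.le hz1
    have hzp0 : 0 ≤ z^(2*(k+1)) := by positivity
    have hk0 : (0:ℝ) < (k:ℝ)+1 := by positivity
    rw [Real.norm_eq_abs, abs_neg, abs_of_nonneg (by positivity)]
    have hE' : Ew (k+1)^2 * (2*((k:ℝ)+1)+1) ≤ 1 := by
      calc Ew (k+1)^2 * (2*((k:ℝ)+1)+1) = Ew (k+1)^2 * ((2*(k+1):ℕ)+1 : ℝ) := by push_cast; ring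
        _ ≤ 1 := by exact_mod_cast Ew_sq_le (k+1)
    have e1 : Ew (k+1)^2 ≤ 1/(2*((k:ℝ)+1)) := by
      rw [le_div_iff₀ (by positivity)]
      nlinarith [sq_nonneg (Ew (k+1))]
    calc z^(2*(k+1)) * (4*π^2) * Ew (k+1)^2 / (2*((k:ℝ)+1))
        ≤ 1 * (4*π^2) * (1/(2*((k:ℝ)+1))) / (2*((k:ℝ)+1)) := by
          gcongr
      _ = π^2 * (1/((k:ℝ)+1)^2) := by field_simp; ring
      _ ≤ 4*π^2 * (1/((k:ℝ)+1)^2) := by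
          apply mul_le_mul_of_nonneg_right _ (by positivity)
          nlinarith [Real.pi_pos]
  -- sum of v
  have hveq : ∑' n, v n = -(4*π^2) * ∑' k : ℕ, z^(2*(k+1)) * Ew (k+1)^2 / (2*((k:ℝ)+1)) := by
    have hevs : Summable (fun k => v (2*k)) := by
      apply summable_zero.congr
      intro k; exact (hveven k).symm
    have hodds : Summable (fun k => v (2*k+1)) := by
      apply hwsummable.congr
      intro k; exact (hvodd k).symm
    rw [← tsum_even_add_odd hevs hodds]
    have h1 : ∑' k, v (2*k) = 0 := by
      rw [tsum_congr hveven]; exact tsum_zero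
    have h2 : ∑' k, v (2*k+1) = -(4*π^2) * ∑' k : ℕ, z^(2*(k+1)) * Ew (k+1)^2 / (2*((k:ℝ)+1)) := by
      rw [tsum_congr hvodd]
      rw [show w = fun k => (-(4*π^2)) * (z^(2*(k+1)) * Ew (k+1)^2 / (2*((k:ℝ)+1))) from
        funext fun k => by rw [hw]; ring]
      exact tsum_mul_left
    rw [h1, h2, zero_add]
  -- final assembly
  rw [← hcongr, ← hkey]
  rw [tsum_congr hIv, Summable.tsum_add hIsum hsv]
  rw [hveq]
  have h3 : ∑' n : ℕ, 2*π*(if n = 0 then (-(2*π))*Real.log z else 0)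
      = 2*π*((-(2*π))*Real.log z) := by
    rw [tsum_mul_left, tsum_ite_eq]
  rw [h3]
  ring

lemma series_eq (z : ℝ) :
    (z^2/8) * F4321 (z^2) = ∑' k : ℕ, z^(2*(k+1)) * Ew (k+1)^2 / (2*((k:ℝ)+1)) := by
  unfold F4321
  rw [← tsum_mul_left]
  apply tsum_congr
  intro n
  rw [coeff_eq n (z^2)]
  have hp : (z^2)^n = z^(2*n) := by rw [← pow_mul]
  rw [hp, show 2*(n+1) = 2*n+2 by ring, pow_add]
  have hn : ((n:ℝ)+1) ≠ 0 := by positivity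
  field_simp
  ring

theorem spanning_tree_hypergeometric (z : ℝ) (h0 : 0 < |z|) (h1 : |z| ≤ 1) :
    T z = Real.log (4/z) - (z^2/8) * F4321 (z^2) := by
  have hz0 : z ≠ 0 := by
    intro h; rw [h] at h0; simp at h0
  have main_pos : ∀ y : ℝ, 0 < y → y ≤ 1 → T y = Real.log (4/y) - (y^2/8) * F4321 (y^2) := by
    intro y hy hy1
    unfold T
    rw [core y hy hy1, series_eq y]
    rw [Real.log_div (by norm_num) (ne_of_gt hy)]
    have hπ : (π:ℝ) ≠ 0 := Real.pi_ne_zero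
    field_simp
    ring
  rcases lt_or_gt_of_ne hz0 with hneg | hpos
  · -- z < 0
    set w := -z with hw
    have hzw : z = -w := by rw [hw]; ring
    have hw0 : 0 < w := by rw [hw]; linarith
    have hw1 : w ≤ 1 := by
      rw [abs_of_neg hneg] at h1; rw [hw]; linarith
    have hwz : w ≠ 0 := ne_of_gt hw0
    have hTz : T z = T w := by
      unfold T
      congr 1
      congr 1
      have h1' : (∫ k₁ in (-π)..π, ∫ k₂ in (-π)..π,
            Real.log (1/z - (1/2)*(Real.cos k₁ + Real.cos k₂)))
          = ∫ k₁ in (-π)..π,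
              (fun y => ∫ k₂ in (-π)..π, Real.log (1/z - (1/2)*(y + Real.cos k₂))) (Real.cos k₁) := rfl
      rw [h1', flip_cos (fun y => ∫ k₂ in (-π)..π, Real.log (1/z - (1/2)*(y + Real.cos k₂)))]
      apply intervalIntegral.integral_congr
      intro k1 _
      dsimp only
      have h2' : (∫ k₂ in (-π)..π, Real.log (1/z - (1/2)*(-Real.cos k1 + Real.cos k₂)))
          = ∫ k₂ in (-π)..π,
              (fun y => Real.log (1/z - (1/2)*(-Real.cos k1 + y))) (Real.cos k₂) := rfl
      rw [h2', flip_cos (fun y => Real.log (1/z - (1/2)*(-Real.cos k1 + y)))]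
      apply intervalIntegral.integral_congr
      intro k2 _
      dsimp only
      rw [show (1:ℝ)/z - (1/2)*(-Real.cos k1 + -Real.cos k2)
          = -((1:ℝ)/w - (1/2)*(Real.cos k1 + Real.cos k2)) by rw [hzw, div_neg]; ring]
      exact Real.log_neg_eq_log _
    rw [hTz, main_pos w hw0 hw1]
    have h4 : (4:ℝ)/w = -(4/z) := by rw [hzw, div_neg]; ring
    have hlog : Real.log (4/w) = Real.log (4/z) := by rw [h4, Real.log_neg_eq_log]
    rw [hlog, show w^2 = z^2 by rw [hzw]; ring]
  · exact main_pos z hpos (by rwa [abs_of_pos hpos] at h1)
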